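/- arXiv:0906.5128 — 2 statements merged into one kernel-verified Lean document; each statement's English description precedes it below -/
import Mathlib

section
/- Let G be a locally compact group with left Haar measure μ and modular function ∇. For f, g ∈ C_c(G) define f♯(t) = conj(f(t⁻¹)) ∇(t)⁻¹ and (Kh)(u) = h(u⁻¹) ∇(u)^{−1/2} for a function h on G. Then for every s ∈ G, ∫_G (Kg)(s⁻¹t) · conj((Kf)(t)) dμ(t) = ∇(s)^{1/2} · (f♯ ∗ g)(s). (This is the integral identity proved in Lemma 4.1, identifying the coefficient function ω_{Kg,Kf} with ∇^{1/2}·(f♯ ∗ g).) -/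
open MeasureTheory Filter
open scoped ENNReal

/-!
A function `del` with `μ.map (· * s) = (del s)⁻¹ • μ` is multiplicative, because right
translation by `a * b` is translation by `a` followed by translation by `b`, and `μ` has a set
of finite positive measure to compare the scalars on. Multiplicativity gives
`del (s⁻¹ * t) ^ (-1/2) * del t ^ (-1/2) = del s ^ (1/2) * (del t)⁻¹`, so the two integrands
agree pointwise once the factor `del s ^ (1/2)` is moved inside the integral.
-/

section ModularFunction

variable {G : Type*} [Group G]

theorem map_mul_of_map_mul_right_eq_smul [MeasurableSpace G] [MeasurableMul G]
    {μ : Measure G} {K : Set G} (hK0 : μ K ≠ 0) (hKtop : μ K ≠ ∞)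
    {del : G → ℝ} (hdel_pos : ∀ s, 0 < del s)
    (hdel : ∀ s : G, μ.map (· * s) = ENNReal.ofReal (del s)⁻¹ • μ) (a b : G) :
    del (a * b) = del a * del b := by
  have hcomp : μ.map (· * (a * b)) = (μ.map (· * a)).map (· * b) := by
    rw [Measure.map_map (measurable_mul_const b) (measurable_mul_const a)]
    simp only [Function.comp_def, mul_assoc]
  rw [hdel, hdel, Measure.map_smul, hdel, smul_smul] at hcomp
  have hscalar : ENNReal.ofReal (del (a * b))⁻¹
      = ENNReal.ofReal (del a)⁻¹ * ENNReal.ofReal (del b)⁻¹ := by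
    rw [← ENNReal.mul_left_inj hK0 hKtop]
    simpa only [Measure.smul_apply, smul_eq_mul] using congrArg (· K) hcomp
  rw [← ENNReal.ofReal_mul (inv_pos.mpr (hdel_pos a)).le,
    ENNReal.ofReal_eq_ofReal_iff (inv_pos.mpr (hdel_pos _)).le
      (mul_pos (inv_pos.mpr (hdel_pos a)) (inv_pos.mpr (hdel_pos b))).le, ← mul_inv] at hscalar
  exact inv_injective hscalar

theorem map_inv_of_map_mul {del : G → ℝ} (hdel_pos : ∀ s, 0 < del s)
    (hmul : ∀ a b, del (a * b) = del a * del b) (a : G) : del a⁻¹ = (del a)⁻¹ := by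
  have hone : del 1 = 1 := by
    have h := hmul 1 1
    rw [one_mul] at h
    exact (mul_eq_left₀ (hdel_pos 1).ne').mp h.symm
  refine eq_inv_of_mul_eq_one_right ?_
  rw [← hmul, mul_inv_cancel, hone]

end ModularFunction

theorem Real.inv_mul_rpow_neg_half_mul_rpow_neg_half {x y : ℝ} (hx : 0 < x) (hy : 0 < y) :
    (x⁻¹ * y) ^ (-(1/2) : ℝ) * y ^ (-(1/2) : ℝ) = x ^ ((1:ℝ)/2) * y⁻¹ := by
  rw [Real.mul_rpow (inv_pos.mpr hx).le hy.le, Real.inv_rpow hx.le, Real.rpow_neg hx.le,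
    inv_inv, mul_assoc, ← Real.rpow_add hy]
  norm_num [Real.rpow_neg_one]

theorem stmt_4_general {G : Type*} [Group G] [TopologicalSpace G] [IsTopologicalGroup G]
    [LocallyCompactSpace G] [MeasurableSpace G] [BorelSpace G]
    (μ : Measure G) [Measure.IsHaarMeasure μ]
    (del : G → ℝ) (hdel_pos : ∀ s, 0 < del s)
    (hdel : ∀ s : G, Measure.map (fun t => t * s) μ = ENNReal.ofReal (del s)⁻¹ • μ)
    (f g : G → ℂ) (s : G) :
    ∫ t, (g ((s⁻¹ * t)⁻¹) * ((del (s⁻¹ * t) ^ (-(1/2) : ℝ) : ℝ) : ℂ)) *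
        (starRingEnd ℂ) (f t⁻¹ * ((del t ^ (-(1/2) : ℝ) : ℝ) : ℂ)) ∂μ
      = ((del s ^ ((1:ℝ)/2) : ℝ) : ℂ) *
        ∫ t, ((starRingEnd ℂ) (f t⁻¹) * (((del t)⁻¹ : ℝ) : ℂ)) * g (t⁻¹ * s) ∂μ := by
  obtain ⟨K, hKc, hK1⟩ := exists_compact_mem_nhds (1 : G)
  have hmul := map_mul_of_map_mul_right_eq_smul (Measure.measure_pos_of_mem_nhds μ hK1).ne'
    hKc.measure_lt_top.ne hdel_pos hdel
  rw [← integral_const_mul]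
  refine integral_congr_ae (Eventually.of_forall fun t => ?_)
  have hfactor : del (s⁻¹ * t) ^ (-(1/2) : ℝ) * del t ^ (-(1/2) : ℝ)
      = del s ^ ((1:ℝ)/2) * (del t)⁻¹ := by
    rw [hmul, map_inv_of_map_mul hdel_pos hmul,
      Real.inv_mul_rpow_neg_half_mul_rpow_neg_half (hdel_pos s) (hdel_pos t)]
  simp only [mul_inv_rev, inv_inv, map_mul, Complex.conj_ofReal]
  calc g (t⁻¹ * s) * ((del (s⁻¹ * t) ^ (-(1/2) : ℝ) : ℝ) : ℂ) *
        ((starRingEnd ℂ) (f t⁻¹) * ((del t ^ (-(1/2) : ℝ) : ℝ) : ℂ))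
      = ((del (s⁻¹ * t) ^ (-(1/2) : ℝ) * del t ^ (-(1/2) : ℝ) : ℝ) : ℂ) *
        ((starRingEnd ℂ) (f t⁻¹) * g (t⁻¹ * s)) := by push_cast; ring
    _ = _ := by rw [hfactor]; push_cast; ring

/-- Let `G` be a locally compact group with left Haar measure `μ` and modular
function `del` (characterised by `Measure.map (· * s) μ = (del s)⁻¹ • μ`).  For
`f, g ∈ C_c(G)` define `f♯(t) = conj(f(t⁻¹)) · (del t)⁻¹` and
`(Kh)(u) = h(u⁻¹) · (del u)^{-1/2}`.  Then for every `s ∈ G`,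
`∫_G (Kg)(s⁻¹t) · conj((Kf)(t)) dμ(t) = (del s)^{1/2} · (f♯ ∗ g)(s)`. -/
theorem stmt_4 {G : Type*} [Group G] [TopologicalSpace G] [IsTopologicalGroup G]
    [LocallyCompactSpace G] [T2Space G] [MeasurableSpace G] [BorelSpace G]
    (μ : Measure G) [Measure.IsHaarMeasure μ]
    (del : G → ℝ) (hdel_pos : ∀ s, 0 < del s) (hdel_cont : Continuous del)
    (hdel : ∀ s : G, Measure.map (fun t => t * s) μ = ENNReal.ofReal (del s)⁻¹ • μ)
    (f g : G → ℂ) (hf : Continuous f) (hfc : HasCompactSupport f)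
    (hg : Continuous g) (hgc : HasCompactSupport g) (s : G) :
    ∫ t, (g ((s⁻¹ * t)⁻¹) * ((del (s⁻¹ * t) ^ (-(1/2) : ℝ) : ℝ) : ℂ)) *
        (starRingEnd ℂ) (f t⁻¹ * ((del t ^ (-(1/2) : ℝ) : ℝ) : ℂ)) ∂μ
      = ((del s ^ ((1:ℝ)/2) : ℝ) : ℂ) *
        ∫ t, ((starRingEnd ℂ) (f t⁻¹) * (((del t)⁻¹ : ℝ) : ℂ)) * g (t⁻¹ * s) ∂μ :=
  stmt_4_general μ del hdel_pos hdel f g s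
end

section
/- Let G be a locally compact group with left Haar measure μ, and let X, Y ⊆ G be compact sets with 0 < μ(Y). Define e = μ(Y)⁻¹ 1_{(XY)⁻¹Y} and g₀ = e ∗ (1_Y)̌, so that g₀(s) = μ(sY ∩ (XY)⁻¹Y)/μ(Y) for all s ∈ G. Then 0 ≤ g₀ ≤ 1, g₀ is supported in the compact set (XY)⁻¹Y Y⁻¹, and g₀(s) = 1 for every s ∈ (XY)⁻¹. (This is the first step of the construction in Proposition 6.2.) -/
open MeasureTheory Filter
open scoped ENNReal Pointwise

/-- The function `g₀(s) = μ(sY ∩ (XY)⁻¹Y)/μ(Y)` from the first step of the construction in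
Proposition 6.2. -/
noncomputable def gZero {G : Type*} [Group G] [MeasurableSpace G]
    (μ : Measure G) (X Y : Set G) (s : G) : ℝ :=
  (μ ((s • Y) ∩ ((X * Y)⁻¹ * Y))).toReal / (μ Y).toReal

/-!
Writing `K = (XY)⁻¹Y`, the integrand of `e ∗ (1_Y)̌` at `s` is `1_K(t) 1_Y(s⁻¹t) = 1_{sY ∩ K}(t)`,
so `g₀(s) = μ(sY ∩ K)/μ(sY)` by left invariance, which lies in `[0, 1]`. It vanishes unless
`sY` meets `K`, i.e. unless `s ∈ KY⁻¹`, and for `s ∈ (XY)⁻¹` we have `sY ⊆ K`, so `g₀(s) = 1`.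
-/

open Set

section Pointwise

variable {G : Type*} [Group G]

lemma indicator_one_inv_mul_inv {M : Type*} [One M] [Zero M] (Y : Set G) (s t : G) :
    Y.indicator (1 : G → M) ((t⁻¹ * s)⁻¹) = (s • Y).indicator 1 t := by
  rw [mul_inv_rev, inv_inv]
  by_cases h : s⁻¹ * t ∈ Y
  · rw [indicator_of_mem h, indicator_of_mem (mem_smul_set_iff_inv_smul_mem.mpr h)]
    rfl
  · rw [indicator_of_notMem h, indicator_of_notMem (mt mem_smul_set_iff_inv_smul_mem.mp h)]

lemma mem_mul_inv_of_smul_inter_nonempty {K Y : Set G} {s : G} (h : (s • Y ∩ K).Nonempty) :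
    s ∈ K * Y⁻¹ := by
  obtain ⟨a, b, ⟨ha, hb⟩, rfl⟩ := smul_inter_nonempty_iff.mp h
  exact mul_mem_mul ha (inv_mem_inv.mpr hb)

end Pointwise

section Convolution

variable {G : Type*} [Group G] [MeasurableSpace G] [MeasurableMul G] (μ : Measure G)

lemma integral_indicator_mul_indicator_one_inv_mul_inv {K Y : Set G} (hK : MeasurableSet K)
    (hY : MeasurableSet Y) (s : G) :
    ∫ t, K.indicator (fun _ => (1 : ℝ)) t * Y.indicator (fun _ => (1 : ℝ)) ((t⁻¹ * s)⁻¹) ∂μ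
      = μ.real (s • Y ∩ K) := by
  have hprod : (fun t => K.indicator (1 : G → ℝ) t * Y.indicator 1 ((t⁻¹ * s)⁻¹))
      = (s • Y ∩ K).indicator 1 := by
    ext t
    rw [inter_indicator_one, Pi.mul_apply, mul_comm, indicator_one_inv_mul_inv]
  exact (congrArg (∫ t, · t ∂μ) hprod).trans
    (integral_indicator_one ((hY.const_smul s).inter hK))

end Convolution

section GZero

variable {G : Type*} [Group G] [MeasurableSpace G] (μ : Measure G) (X Y : Set G)

lemma convolution_indicator_eq_gZero [MeasurableMul G] (hK : MeasurableSet ((X * Y)⁻¹ * Y))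
    (hY : MeasurableSet Y) (s : G) :
    (μ Y).toReal⁻¹ *
        ∫ t, ((X * Y)⁻¹ * Y).indicator (fun _ => (1 : ℝ)) t *
          Y.indicator (fun _ => (1 : ℝ)) ((t⁻¹ * s)⁻¹) ∂μ
      = gZero μ X Y s := by
  rw [integral_indicator_mul_indicator_one_inv_mul_inv μ hK hY, gZero, div_eq_inv_mul, measureReal_def]

lemma gZero_nonneg (s : G) : 0 ≤ gZero μ X Y s :=
  div_nonneg ENNReal.toReal_nonneg ENNReal.toReal_nonneg

lemma mem_mul_inv_of_gZero_ne_zero {s : G} (h : gZero μ X Y s ≠ 0) :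
    s ∈ (X * Y)⁻¹ * Y * Y⁻¹ :=
  mem_mul_inv_of_smul_inter_nonempty <| nonempty_of_measure_ne_zero (μ := μ) fun h0 => h (by rw [gZero, h0, ENNReal.toReal_zero, zero_div])

variable [μ.IsMulLeftInvariant]

lemma gZero_le_one (s : G) : gZero μ X Y s ≤ 1 := by
  rcases eq_or_ne (μ Y) ∞ with hY | hY
  · simp [gZero, hY]
  · refine div_le_one_of_le₀ ?_ ENNReal.toReal_nonneg
    rw [← measure_smul μ s Y] at hY ⊢
    exact ENNReal.toReal_mono hY (measure_mono inter_subset_left)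

lemma gZero_eq_one_of_mem_inv {X Y : Set G} (hY0 : μ Y ≠ 0) (hY : μ Y ≠ ∞) {s : G}
    (hs : s ∈ (X * Y)⁻¹) : gZero μ X Y s = 1 := by
  rw [gZero, inter_eq_left.mpr (smul_set_subset_mul hs), measure_smul,
    div_self (ENNReal.toReal_ne_zero.mpr ⟨hY0, hY⟩)]

end GZero

theorem stmt_8_general {G : Type*} [Group G] [TopologicalSpace G] [IsTopologicalGroup G]
    [T2Space G] [MeasurableSpace G] [BorelSpace G]
    (μ : Measure G) [Measure.IsHaarMeasure μ]
    (X Y : Set G) (hX : IsCompact X) (hY : IsCompact Y) (hY0 : 0 < μ Y) :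
    -- the convolution formula `e ∗ (1_Y)̌ = g₀`:
    (∀ s : G,
      (μ Y).toReal⁻¹ *
          ∫ t, ((X * Y)⁻¹ * Y).indicator (fun _ => (1 : ℝ)) t *
            Y.indicator (fun _ => (1 : ℝ)) ((t⁻¹ * s)⁻¹) ∂μ
        = gZero μ X Y s) ∧
    (∀ s : G, 0 ≤ gZero μ X Y s ∧ gZero μ X Y s ≤ 1) ∧
    IsCompact ((X * Y)⁻¹ * Y * Y⁻¹) ∧
    (∀ s : G, gZero μ X Y s ≠ 0 → s ∈ (X * Y)⁻¹ * Y * Y⁻¹) ∧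
    (∀ s ∈ (X * Y)⁻¹, gZero μ X Y s = 1) := by
  have hK : IsCompact ((X * Y)⁻¹ * Y) := (hX.mul hY).inv.mul hY
  exact ⟨convolution_indicator_eq_gZero μ X Y hK.measurableSet hY.measurableSet,
    fun s => ⟨gZero_nonneg μ X Y s, gZero_le_one μ X Y s⟩,
    hK.mul hY.inv,
    fun _ => mem_mul_inv_of_gZero_ne_zero μ X Y,
    fun _ => gZero_eq_one_of_mem_inv μ hY0.ne' hY.measure_lt_top.ne⟩

/-- Let `G` be a locally compact group with left Haar measure `μ` and let
`X, Y ⊆ G` be compact with `0 < μ(Y)`.  With `e = μ(Y)⁻¹ 1_{(XY)⁻¹Y}` and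
`g₀ = e ∗ (1_Y)̌`, so that `g₀(s) = μ(sY ∩ (XY)⁻¹Y)/μ(Y)`, we have `0 ≤ g₀ ≤ 1`, `g₀` is
supported in the compact set `(XY)⁻¹ Y Y⁻¹`, and `g₀ = 1` on `(XY)⁻¹`. -/
theorem stmt_8 {G : Type*} [Group G] [TopologicalSpace G] [IsTopologicalGroup G]
    [LocallyCompactSpace G] [T2Space G] [MeasurableSpace G] [BorelSpace G]
    (μ : Measure G) [Measure.IsHaarMeasure μ]
    (X Y : Set G) (hX : IsCompact X) (hY : IsCompact Y) (hY0 : 0 < μ Y) :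
    -- the convolution formula `e ∗ (1_Y)̌ = g₀`:
    (∀ s : G,
      (μ Y).toReal⁻¹ *
          ∫ t, ((X * Y)⁻¹ * Y).indicator (fun _ => (1 : ℝ)) t *
            Y.indicator (fun _ => (1 : ℝ)) ((t⁻¹ * s)⁻¹) ∂μ
        = gZero μ X Y s) ∧
    (∀ s : G, 0 ≤ gZero μ X Y s ∧ gZero μ X Y s ≤ 1) ∧
    IsCompact ((X * Y)⁻¹ * Y * Y⁻¹) ∧
    (∀ s : G, gZero μ X Y s ≠ 0 → s ∈ (X * Y)⁻¹ * Y * Y⁻¹) ∧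
    (∀ s ∈ (X * Y)⁻¹, gZero μ X Y s = 1) :=
  stmt_8_general μ X Y hX hY hY0
end
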